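/- arXiv:2512.23224 — 6 statements merged into one kernel-verified Lean document; each statement's English description precedes it below -/
import Mathlib

section
/- Let W be the group of signed permutations of {1,...,n} (the Weyl group of type C_n), acting on {1,...,n,n̄,...,1̄} with the total order 1 < 2 < ... < n < n̄ < ... < 2̄ < 1̄ and w(k̄) = \overline{w(k)}. Fix a subset J ⊆ {1,...,n}. Suppose w ∈ W satisfies: for all 1 ≤ i < j ≤ n, w(i) > w(j) implies (i ∈ J and j ∉ J). If w' = w·s_{(p,q)} where 1 ≤ p < q ≤ n, p ∈ J, q ∉ J, and the edge w → w' is a Bruhat edge of the quantum Bruhat graph (i.e. w(p) < w(q) and there is no p < k < q with w(p) < w(k) < w(q)), then w' also satisfies: for all 1 ≤ i < j ≤ n, w'(i) > w'(j) implies (i ∈ J and j ∉ J). -/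
/-- We model the Weyl group of type `C_n` (signed permutations of `{1,…,n}`) as the group of
permutations `w` of `Fin (2*n)` commuting with the order-reversing involution
`Fin.rev` (which plays the role of the bar involution `k ↦ k̄`); the linear order on
`Fin (2*n)` realizes the total order `1 < 2 < ⋯ < n < n̄ < ⋯ < 2̄ < 1̄`, positions with
value `< n` being the "positive" entries `1,…,n`. Fix `J ⊆ {1,…,n}`.  If
`w` satisfies the descent condition (`w i > w j` for `i < j ≤ n` implies `i ∈ J` and `j ∉ J`)
and `w' = w·s_{(p,q)}` is obtained from a Bruhat edge of the quantum Bruhat graph labeled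
`(p,q)` with `p < q ≤ n`, `p ∈ J`, `q ∉ J` (Bruhat edge criterion: `w p < w q` and there is
no `p < k < q` with `w p < w k < w q`), then `w'` satisfies the same descent condition. -/
theorem stmt3 (n : ℕ) (J : Finset (Fin (2 * n))) (hJ : ∀ j ∈ J, (j : ℕ) < n)
    (w : Equiv.Perm (Fin (2 * n))) (hw : ∀ k, w k.rev = (w k).rev)
    (hdesc : ∀ i j : Fin (2 * n), (i : ℕ) < n → (j : ℕ) < n → i < j → w j < w i →
      i ∈ J ∧ j ∉ J)
    (p q : Fin (2 * n)) (hp : (p : ℕ) < n) (hq : (q : ℕ) < n) (hpq : p < q)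
    (hpJ : p ∈ J) (hqJ : q ∉ J)
    (hB1 : w p < w q)
    (hB2 : ¬ ∃ k : Fin (2 * n), p < k ∧ k < q ∧ w p < w k ∧ w k < w q)
    (w' : Equiv.Perm (Fin (2 * n)))
    (hw' : w' = w * (Equiv.swap p q * Equiv.swap p.rev q.rev)) :
    ∀ i j : Fin (2 * n), (i : ℕ) < n → (j : ℕ) < n → i < j → w' j < w' i →
      i ∈ J ∧ j ∉ J := by
  have key : ∀ x : Fin (2 * n), (x : ℕ) < n → w' x = w (Equiv.swap p q x) := by
    intro x hx
    have h1 : x ≠ p.rev := by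
      intro h
      have : (x : ℕ) = 2 * n - (↑p + 1) := by rw [h, Fin.val_rev]
      omega
    have h2 : x ≠ q.rev := by
      intro h
      have : (x : ℕ) = 2 * n - (↑q + 1) := by rw [h, Fin.val_rev]
      omega
    rw [hw']
    simp only [Equiv.Perm.mul_apply]
    rw [Equiv.swap_apply_of_ne_of_ne h1 h2]
  intro i j hi hj hij hlt
  rw [key i hi, key j hj] at hlt
  rcases eq_or_ne i p with rip | rip
  · rw [rip] at hlt hij ⊢
    rcases eq_or_ne j q with rjq | rjq
    · rw [rjq]; exact ⟨hpJ, hqJ⟩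
    · have hjp : j ≠ p := ne_of_gt hij
      rw [Equiv.swap_apply_left, Equiv.swap_apply_of_ne_of_ne hjp rjq] at hlt
      rcases lt_trichotomy j q with h | h | h
      · have hnc : ¬ (w p < w j) := fun hc => hB2 ⟨j, hij, h, hc, hlt⟩
        have hwj : w j < w p :=
          (not_lt.mp hnc).lt_of_ne (fun h' => hjp (w.injective h'))
        exact hdesc p j hp hj hij hwj
      · exact absurd h rjq
      · exact absurd (hdesc q j hq hj h hlt).1 hqJ
  · rcases eq_or_ne i q with riq | riq
    · rw [riq] at hlt hij ⊢
      have hjq : j ≠ q := ne_of_gt hij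
      have hjp : j ≠ p := ne_of_gt (hpq.trans hij)
      rw [Equiv.swap_apply_right, Equiv.swap_apply_of_ne_of_ne hjp hjq] at hlt
      exact absurd (hdesc q j hq hj hij (hlt.trans hB1)).1 hqJ
    · rw [Equiv.swap_apply_of_ne_of_ne rip riq] at hlt
      rcases eq_or_ne j p with rjp | rjp
      · rw [rjp] at hlt hij ⊢
        rw [Equiv.swap_apply_left] at hlt
        exact absurd hpJ (hdesc i p hi hp hij (hB1.trans hlt)).2
      · rcases eq_or_ne j q with rjq | rjq
        · rw [rjq] at hlt hij ⊢
          rw [Equiv.swap_apply_right] at hlt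
          rcases lt_trichotomy i p with h | h | h
          · exact ⟨(hdesc i p hi hp h hlt).1, hqJ⟩
          · exact absurd h rip
          · have hnc : ¬ (w i < w q) := fun hc => hB2 ⟨i, h, hij, hlt, hc⟩
            have hwi : w q < w i :=
              (not_lt.mp hnc).lt_of_ne (fun h' => riq (w.injective h'.symm))
            exact hdesc i q hi hq hij hwi
        · rw [Equiv.swap_apply_of_ne_of_ne rjp rjq] at hlt
          exact hdesc i j hi hj hij hlt
end

section
/- Let R be a commutative ring and Q_1,...,Q_{n-1} elements of R such that 1 - Q_j is invertible for each j. In the polynomial ring over R, suppose elements L_S indexed by subsets S ⊆ {1,...,n} satisfy L_∅ = 1 and, for each 2 ≤ k ≤ n and J ⊆ {1,...,k-1}: L_{J∪{k}} = (1/(1-Q_{k-1}))·L_J·L_{{k}} if k-1 ∈ J, and L_{J∪{k}} = L_J·L_{{k}} if k-1 ∉ J; and similarly L_{{1}∪J'} follows the pattern for 1-element extensions. Then for 1 ≤ d ≤ k ≤ n, setting A_d^k := ∑_{J⊆{1,...,k}, |J|=d} L_J, one has A_d^k = A_d^{k-1} + (1/(1-Q_{k-1}))·L_{{k}}·(A_{d-1}^{k-1}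 - Q_{k-1}·A_{d-1}^{k-2}), with the conventions A_0^k = 1, A_d^k = 0 for d > k, A_d^{-1} = A_d^0 = 0 for d > 0 and Q_0 = 0. -/
/-- Abstract form of the quantum-Whitney recursion for line-bundle classes.
Let `R` be a commutative ring, `Q 0 = 0`, and `u j` units with `u j = 1 - Q j`.
Suppose `L S` (indexed by subsets `S ⊆ {1,…,n}`) satisfy `L ∅ = 1` and the multiplicative
splitting: for `1 ≤ k ≤ n` and `J ⊆ {1,…,k-1}`,
`L (J ∪ {k}) = (1/(1-Q_{k-1}))·L J·L {k}` if `k-1 ∈ J` and `L (J ∪ {k}) = L J·L {k}`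
otherwise.  Then, setting `A k d = ∑_{J ⊆ {1,…,k}, |J| = d} L J` (so that `A k 0 = 1`,
`A k d = 0` for `d > k`, and the `k = -1, 0` conventions hold automatically),
for `1 ≤ d ≤ k ≤ n` one has
`A k d = A (k-1) d + (1/(1-Q_{k-1}))·L {k}·(A (k-1) (d-1) - Q_{k-1}·A (k-2) (d-1))`. -/
theorem stmt9 (R : Type*) [CommRing R] (n : ℕ) (Q : ℕ → R) (hQ0 : Q 0 = 0)
    (u : ℕ → Rˣ) (hu : ∀ j, (u j : R) = 1 - Q j)
    (L : Finset ℕ → R) (hL1 : L ∅ = 1)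
    (hL : ∀ (kk : ℕ) (J : Finset ℕ), 1 ≤ kk → kk ≤ n → J ⊆ Finset.Icc 1 (kk - 1) →
      L (insert kk J) =
        (if kk - 1 ∈ J then (((u (kk - 1))⁻¹ : Rˣ) : R) else 1) * (L J * L {kk})) :
    ∀ d kk : ℕ, 1 ≤ d → d ≤ kk → kk ≤ n →
      (∑ J ∈ (Finset.Icc 1 kk).powersetCard d, L J) =
        (∑ J ∈ (Finset.Icc 1 (kk - 1)).powersetCard d, L J) +
          (((u (kk - 1))⁻¹ : Rˣ) : R) * L {kk} *
            ((∑ J ∈ (Finset.Icc 1 (kk - 1)).powersetCard (d - 1), L J) -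
              Q (kk - 1) * (∑ J ∈ (Finset.Icc 1 (kk - 2)).powersetCard (d - 1), L J)) := by
  intro d kk hd hdk hkn
  obtain ⟨e, rfl⟩ : ∃ e, d = e + 1 := ⟨d - 1, by omega⟩
  obtain ⟨k, rfl⟩ : ∃ k, kk = k + 1 := ⟨kk - 1, by omega⟩
  simp only [Nat.add_sub_cancel]
  have h2 : k + 1 - 2 = k - 1 := by omega
  rw [h2]
  have hins : Finset.Icc 1 (k+1) = insert (k+1) (Finset.Icc 1 k) := by
    ext x; simp [Finset.mem_Icc]; omega
  have hnotmem : (k+1) ∉ Finset.Icc 1 k := by simp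
  rw [hins, Finset.powersetCard_succ_insert hnotmem, Finset.sum_union, Finset.sum_image]
  · -- main goal
    have hkey : ∀ J ∈ (Finset.Icc 1 k).powersetCard e,
        L (insert (k+1) J) =
          (if k ∈ J then (((u k)⁻¹ : Rˣ) : R) else 1) * (L J * L {k+1}) := by
      intro J hJ
      have hJs : J ⊆ Finset.Icc 1 ((k+1) - 1) := by
        rw [Nat.add_sub_cancel]; exact (Finset.mem_powersetCard.mp hJ).1
      have := hL (k+1) J (by omega) hkn hJs
      simpa using this
    rw [Finset.sum_congr rfl hkey]
    rw [← Finset.sum_filter_add_sum_filter_not ((Finset.Icc 1 k).powersetCard e)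
      (fun J => k ∈ J)]
    have hfin : ∀ J ∈ ((Finset.Icc 1 k).powersetCard e).filter (fun J => k ∈ J),
        (if k ∈ J then (((u k)⁻¹ : Rˣ) : R) else 1) * (L J * L {k+1})
          = (((u k)⁻¹ : Rˣ) : R) * L {k+1} * L J := by
      intro J hJ
      rw [if_pos (Finset.mem_filter.mp hJ).2]; ring
    have hfout : ∀ J ∈ ((Finset.Icc 1 k).powersetCard e).filter (fun J => ¬ k ∈ J),
        (if k ∈ J then (((u k)⁻¹ : Rˣ) : R) else 1) * (L J * L {k+1})
          = L {k+1} * L J := by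
      intro J hJ
      rw [if_neg (Finset.mem_filter.mp hJ).2]; ring
    rw [Finset.sum_congr rfl hfin, Finset.sum_congr rfl hfout,
      ← Finset.mul_sum, ← Finset.mul_sum]
    -- filter (k ∉ ·) = powersetCard e (Icc 1 (k-1))
    have hfilter : ((Finset.Icc 1 k).powersetCard e).filter (fun J => ¬ k ∈ J)
        = (Finset.Icc 1 (k-1)).powersetCard e := by
      ext J
      simp only [Finset.mem_filter, Finset.mem_powersetCard]
      constructor
      · rintro ⟨⟨hsub, hcard⟩, hk⟩
        refine ⟨fun x hx => ?_, hcard⟩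
        have := hsub hx
        simp only [Finset.mem_Icc] at this ⊢
        have : x ≠ k := fun h => hk (h ▸ hx)
        omega
      · rintro ⟨hsub, hcard⟩
        have hsub' : J ⊆ Finset.Icc 1 k := fun x hx => by
          have := hsub hx; simp only [Finset.mem_Icc] at this ⊢; omega
        refine ⟨⟨hsub', hcard⟩, fun hk => ?_⟩
        have := hsub hk; simp only [Finset.mem_Icc] at this; omega
    -- decompose S₁
    have hS1 : (∑ J ∈ (Finset.Icc 1 k).powersetCard e, L J)
        = (∑ J ∈ ((Finset.Icc 1 k).powersetCard e).filter (fun J => k ∈ J), L J)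
          + (∑ J ∈ (Finset.Icc 1 (k-1)).powersetCard e, L J) := by
      rw [← hfilter, Finset.sum_filter_add_sum_filter_not]
    rw [hfilter, hS1]
    have hu' : (((u k)⁻¹ : Rˣ) : R) * (1 - Q k) = 1 := by
      rw [← hu]; exact Units.inv_mul (u k)
    set Sin := ∑ J ∈ ((Finset.Icc 1 k).powersetCard e).filter (fun J => k ∈ J), L J
    set S2 := ∑ J ∈ (Finset.Icc 1 (k-1)).powersetCard e, L J
    linear_combination (-(L {k+1} * S2)) * hu'
  · -- injectivity of insert (k+1) on the powerset
    intro J hJ J' hJ' hEq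
    have hJm := (Finset.mem_powersetCard.mp (by simpa using hJ)).1
    have hJm' := (Finset.mem_powersetCard.mp (by simpa using hJ')).1
    have hk : (k+1) ∉ J := fun h => hnotmem (hJm h)
    have hk' : (k+1) ∉ J' := fun h => hnotmem (hJm' h)
    have := congrArg (Finset.erase · (k+1)) hEq
    simpa [Finset.erase_insert, hk, hk'] using this
  · -- disjointness
    rw [Finset.disjoint_right]
    intro J hJ hJ'
    obtain ⟨J', hJ'mem, rfl⟩ := Finset.mem_image.mp hJ
    have := (Finset.mem_powersetCard.mp hJ').1 (Finset.mem_insert_self _ _)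
    exact hnotmem this
end

section
/- Fix n ≥ 1 and work in a commutative ring with elements Q_1,...,Q_n and invertible 1-Q_j, and Q_0 := 0. For subsets J ⊆ {1,...,n}, define the coefficient c(J) := ∏_{2≤j≤n, j-1∈J, j∈J} 1/(1-Q_{j-1}). Then for any subsets J, K ⊆ {1,...,n} with max J ≠ max K (or one of them empty), one has c(J)·c(K) = c'(J ⊔ K̄) where K̄ = {j̄ : j ∈ K} ⊂ {n̄,...,1̄} and c' is the product of the corresponding φ-coefficients φ_{J⊔K̄}(j) over all j ∈ {1,...,n,n̄,...,1̄}; while if max J = max K = p then c(J)·c(K) = c'(J⊔K̄) - (Q_p·Q_{p+1}···Q_n/(1-Q_p))·c(J)·c(K), i.e. c'(J⊔K̄) = (1 + Q_p···Q_n/(1-Q_p))·c(J)·c(K). -/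
/-- The coefficient `φ_L(t)` for `L ⊆ {1,…,n,n̄,…,1̄}`, where `{1,…,n,n̄,…,1̄}` is modeled
as `{1,…,2n}` (with bar `j ↦ 2n+1-j`) in the order `1 < ⋯ < n < n̄ < ⋯ < 1̄`:
for `1 ≤ t ≤ n`, `φ_L(t) = 1/(1-Q_t)` if `t, t+1 ∈ L`, else `1`;
`φ_L(1̄) = 1`; and for `t = j̄` with `2 ≤ j ≤ n`,
`φ_L(j̄) = 1 + Q_{j-1}Q_j⋯Q_n/(1-Q_{j-1})` if `j-1` and `\overline{j-1}` belong to `L`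
consecutively (no element of `L` strictly between), `φ_L(j̄) = 1/(1-Q_{j-1})` if
`j̄, \overline{j-1} ∈ L`, and `1` otherwise.  Here the units `u j = 1 - Q j` encode the
invertibility of `1 - Q_j`. -/
def phiC {R : Type*} [CommRing R] (n : ℕ) (Q : ℕ → R) (u : ℕ → Rˣ)
    (L : Finset ℕ) (t : ℕ) : R :=
  if t ≤ n then (if t ∈ L ∧ t + 1 ∈ L then (((u t)⁻¹ : Rˣ) : R) else 1)
  else if t = 2 * n then 1
  else
    let j := 2 * n + 1 - t
    if (j - 1 ∈ L ∧ 2 * n + 1 - (j - 1) ∈ L ∧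
        ∀ x ∈ L, ¬(j - 1 < x ∧ x < 2 * n + 1 - (j - 1))) then
      1 + (∏ i ∈ Finset.Icc (j - 1) n, Q i) * (((u (j - 1))⁻¹ : Rˣ) : R)
    else if t ∈ L ∧ 2 * n + 1 - (j - 1) ∈ L then (((u (j - 1))⁻¹ : Rˣ) : R)
    else 1

/-- The coefficient `c(J) = ∏_{2 ≤ j ≤ n, j-1 ∈ J, j ∈ J} 1/(1-Q_{j-1})` for
`J ⊆ {1,…,n}`. -/
def cC {R : Type*} [CommRing R] (n : ℕ) (u : ℕ → Rˣ) (J : Finset ℕ) : R :=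
  ∏ j ∈ Finset.Icc 2 n, (if j - 1 ∈ J ∧ j ∈ J then (((u (j - 1))⁻¹ : Rˣ) : R) else 1)

lemma max_eq_iff_aux {S : Finset ℕ} {a : ℕ} :
    S.max = (a : WithBot ℕ) ↔ a ∈ S ∧ ∀ x ∈ S, x ≤ a := by
  constructor
  · intro h
    refine ⟨Finset.mem_of_max h, fun x hx => ?_⟩
    have hle := Finset.le_max hx
    rw [h] at hle
    exact WithBot.coe_le_coe.mp hle
  · rintro ⟨h1, h2⟩
    exact le_antisymm (Finset.max_le fun x hx => WithBot.coe_le_coe.mpr (h2 x hx))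
      (Finset.le_max h1)

/-- Comparison of `φ`-coefficients: for `J, K ⊆ {1,…,n}` with `max J ≠ max K` (or one of them
empty), `c(J)·c(K) = ∏_{t=1}^{2n} φ_{J ⊔ K̄}(t)`, while if `max J = max K = p` then
`∏_{t=1}^{2n} φ_{J ⊔ K̄}(t) = (1 + Q_p⋯Q_n/(1-Q_p))·c(J)·c(K)`, where
`K̄ = {2n+1-j : j ∈ K}`. -/
theorem stmt11 (R : Type*) [CommRing R] (n : ℕ) (hn : 1 ≤ n)
    (Q : ℕ → R) (u : ℕ → Rˣ) (hu : ∀ j, (u j : R) = 1 - Q j)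
    (J K : Finset ℕ) (hJ : J ⊆ Finset.Icc 1 n) (hK : K ⊆ Finset.Icc 1 n) :
    ((J = ∅ ∨ K = ∅ ∨ J.max ≠ K.max) →
      cC n u J * cC n u K =
        ∏ t ∈ Finset.Icc 1 (2 * n), phiC n Q u (J ∪ K.image (fun j => 2 * n + 1 - j)) t) ∧
    (∀ p : ℕ, J.max = (p : ℕ) → K.max = (p : ℕ) →
      (∏ t ∈ Finset.Icc 1 (2 * n), phiC n Q u (J ∪ K.image (fun j => 2 * n + 1 - j)) t) =
        (1 + (∏ i ∈ Finset.Icc p n, Q i) * (((u p)⁻¹ : Rˣ) : R)) *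
          (cC n u J * cC n u K)) := by
  set Kb := K.image (fun j => 2 * n + 1 - j) with hKb
  set L := J ∪ Kb with hLdef
  have hJn : ∀ x ∈ J, 1 ≤ x ∧ x ≤ n := by
    intro x hx
    have := hJ hx; rw [Finset.mem_Icc] at this; exact this
  have hKn : ∀ x ∈ K, 1 ≤ x ∧ x ≤ n := by
    intro x hx
    have := hK hx; rw [Finset.mem_Icc] at this; exact this
  have hL1 : ∀ t, t ≤ n → (t ∈ L ↔ t ∈ J) := by
    intro t ht
    simp only [hLdef, Finset.mem_union, hKb, Finset.mem_image]
    constructor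
    · rintro (h | ⟨j, hj, rfl⟩)
      · exact h
      · have := hKn j hj; omega
    · exact Or.inl
  have hL2 : ∀ t, n + 1 ≤ t → t ≤ 2 * n → (t ∈ L ↔ 2 * n + 1 - t ∈ K) := by
    intro t h1 h2
    simp only [hLdef, Finset.mem_union, hKb, Finset.mem_image]
    constructor
    · rintro (h | ⟨j, hj, rfl⟩)
      · have := hJn t h; omega
      · have hb := hKn j hj
        rwa [show 2 * n + 1 - (2 * n + 1 - j) = j by omega]
    · intro h
      exact Or.inr ⟨2 * n + 1 - t, h, by omega⟩
  -- pointwise values of phiC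
  have phi_low : ∀ t, 1 ≤ t → t ≤ n - 1 →
      phiC n Q u L t = (if t ∈ J ∧ t + 1 ∈ J then (((u t)⁻¹ : Rˣ) : R) else 1) := by
    intro t h1 h2
    simp only [phiC]
    rw [if_pos (by omega : t ≤ n)]
    exact if_congr (and_congr (hL1 t (by omega)) (hL1 (t + 1) (by omega))) rfl rfl
  have phi_n : phiC n Q u L n = (if n ∈ J ∧ n ∈ K then (((u n)⁻¹ : Rˣ) : R) else 1) := by
    simp only [phiC]
    rw [if_pos (le_refl n)]
    have h2 : n + 1 ∈ L ↔ n ∈ K := by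
      rw [hL2 (n + 1) le_rfl (by omega), show 2 * n + 1 - (n + 1) = n by omega]
    exact if_congr (and_congr (hL1 n le_rfl) h2) rfl rfl
  have phi_2n : phiC n Q u L (2 * n) = 1 := by
    simp only [phiC]
    rw [if_neg (by omega : ¬ 2 * n ≤ n)]
    simp
  have phi_high : ∀ t, n + 1 ≤ t → t ≤ 2 * n - 1 →
      phiC n Q u L t =
        (if J.max = ((2 * n - t : ℕ) : WithBot ℕ) ∧ K.max = ((2 * n - t : ℕ) : WithBot ℕ) then
          1 + (∏ i ∈ Finset.Icc (2 * n - t) n, Q i) * (((u (2 * n - t))⁻¹ : Rˣ) : R)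
        else if 2 * n - t ∈ K ∧ 2 * n + 1 - t ∈ K then (((u (2 * n - t))⁻¹ : Rˣ) : R)
        else 1) := by
    intro t h1 h2
    have e1 : 2 * n + 1 - t - 1 = 2 * n - t := by omega
    have e2 : 2 * n + 1 - (2 * n - t) = t + 1 := by omega
    simp only [phiC]
    rw [if_neg (by omega : ¬ t ≤ n), if_neg (by omega : ¬ t = 2 * n)]
    simp only [e1, e2]
    have hAiff : (2 * n - t ∈ L ∧ t + 1 ∈ L ∧ ∀ x ∈ L, ¬(2 * n - t < x ∧ x < t + 1)) ↔
        (J.max = ((2 * n - t : ℕ) : WithBot ℕ) ∧ K.max = ((2 * n - t : ℕ) : WithBot ℕ)) := by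
      rw [hL1 _ (by omega : 2 * n - t ≤ n), hL2 (t + 1) (by omega) (by omega),
        show 2 * n + 1 - (t + 1) = 2 * n - t by omega, max_eq_iff_aux, max_eq_iff_aux]
      constructor
      · rintro ⟨hJm, hKm, hgap⟩
        refine ⟨⟨hJm, fun x hx => ?_⟩, hKm, fun k hk => ?_⟩
        · by_contra hc
          exact hgap x ((hL1 x (hJn x hx).2).mpr hx)
            ⟨by omega, by have := (hJn x hx).2; omega⟩
        · by_contra hc
          have hbl := hKn k hk
          have hxm : 2 * n + 1 - k ∈ L := by
            rw [hL2 _ (by omega) (by omega), show 2 * n + 1 - (2 * n + 1 - k) = k by omega]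
            exact hk
          exact hgap _ hxm ⟨by omega, by omega⟩
      · rintro ⟨⟨hJm, hJle⟩, hKm, hKle⟩
        refine ⟨hJm, hKm, fun x hx => ?_⟩
        rintro ⟨ha, hb⟩
        by_cases hxn : x ≤ n
        · have := hJle x ((hL1 x hxn).mp hx); omega
        · have hx2 : x ≤ 2 * n := by
            rw [hLdef, Finset.mem_union, hKb, Finset.mem_image] at hx
            rcases hx with h | ⟨j, hj, rfl⟩
            · exact absurd (hJn x h).2 hxn
            · have := hKn j hj; omega
          have := hKle _ ((hL2 x (by omega) hx2).mp hx)
          omega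
    have hBiff : (t ∈ L ∧ t + 1 ∈ L) ↔ (2 * n - t ∈ K ∧ 2 * n + 1 - t ∈ K) := by
      rw [hL2 t (by omega) (by omega), hL2 (t + 1) (by omega) (by omega),
        show 2 * n + 1 - (t + 1) = 2 * n - t by omega]
      exact and_comm
    exact if_congr hAiff rfl (if_congr hBiff rfl rfl)
  -- product decompositions
  have hsplit : (∏ t ∈ Finset.Icc 1 (2 * n), phiC n Q u L t) =
      ((∏ t ∈ Finset.Icc 1 (n - 1), phiC n Q u L t) * phiC n Q u L n) *
        ∏ t ∈ Finset.Icc (n + 1) (2 * n), phiC n Q u L t := by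
    rw [show Finset.Icc 1 (2 * n) = Finset.Icc 1 n ∪ Finset.Icc (n + 1) (2 * n) from by
        ext x; simp only [Finset.mem_Icc, Finset.mem_union]; omega,
      Finset.prod_union (by
        rw [Finset.disjoint_left]; intro x hx hx'
        simp only [Finset.mem_Icc] at hx hx'; omega),
      show Finset.Icc 1 n = insert n (Finset.Icc 1 (n - 1)) from by
        ext x; simp only [Finset.mem_Icc, Finset.mem_insert]; omega,
      Finset.prod_insert (by simp only [Finset.mem_Icc]; omega)]
    ring
  have hlow : (∏ t ∈ Finset.Icc 1 (n - 1), phiC n Q u L t) = cC n u J := by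
    rw [cC]
    refine Finset.prod_nbij' (fun t => t + 1) (fun t => t - 1) ?_ ?_ ?_ ?_ ?_
    · intro a ha; simp only [Finset.mem_Icc] at ha ⊢; omega
    · intro a ha; simp only [Finset.mem_Icc] at ha ⊢; omega
    · intro a ha; simp only [Finset.mem_Icc] at ha; show a + 1 - 1 = a; omega
    · intro a ha; simp only [Finset.mem_Icc] at ha; show a - 1 + 1 = a; omega
    · intro a ha; simp only [Finset.mem_Icc] at ha
      rw [phi_low a ha.1 ha.2, Nat.add_sub_cancel]
  have hKprod : (∏ t ∈ Finset.Icc (n + 1) (2 * n),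
      (if 2 * n - t ∈ K ∧ 2 * n + 1 - t ∈ K then (((u (2 * n - t))⁻¹ : Rˣ) : R) else 1))
      = cC n u K := by
    have h0K : (0 : ℕ) ∉ K := fun h => by have := hKn 0 h; omega
    rw [cC, show Finset.Icc 2 n = (Finset.Icc 1 n).erase 1 from by
        ext x; simp only [Finset.mem_Icc, Finset.mem_erase]; omega,
      Finset.prod_erase _ (by norm_num [h0K])]
    refine Finset.prod_nbij' (fun t => 2 * n + 1 - t) (fun j => 2 * n + 1 - j) ?_ ?_ ?_ ?_ ?_
    · intro a ha; simp only [Finset.mem_Icc] at ha ⊢; omega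
    · intro a ha; simp only [Finset.mem_Icc] at ha ⊢; omega
    · intro a ha; simp only [Finset.mem_Icc] at ha
      show 2 * n + 1 - (2 * n + 1 - a) = a; omega
    · intro a ha; simp only [Finset.mem_Icc] at ha
      show 2 * n + 1 - (2 * n + 1 - a) = a; omega
    · intro a ha; simp only [Finset.mem_Icc] at ha
      rw [show 2 * n + 1 - a - 1 = 2 * n - a by omega]
  constructor
  · -- case of distinct maxima
    intro h
    have hnM : ∀ a : ℕ, ¬(J.max = (a : WithBot ℕ) ∧ K.max = (a : WithBot ℕ)) := by
      rintro a ⟨h1, h2⟩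
      rcases h with hJe | hKe | hne
      · rw [hJe, Finset.max_empty] at h1; exact absurd h1 (by simp)
      · rw [hKe, Finset.max_empty] at h2; exact absurd h2 (by simp)
      · exact hne (h1.trans h2.symm)
    have hnN : ¬(n ∈ J ∧ n ∈ K) := by
      rintro ⟨h1, h2⟩
      exact hnM n ⟨max_eq_iff_aux.mpr ⟨h1, fun x hx => (hJn x hx).2⟩,
        max_eq_iff_aux.mpr ⟨h2, fun x hx => (hKn x hx).2⟩⟩
    have hhigh1 : ∀ t ∈ Finset.Icc (n + 1) (2 * n), phiC n Q u L t =
        (if 2 * n - t ∈ K ∧ 2 * n + 1 - t ∈ K then (((u (2 * n - t))⁻¹ : Rˣ) : R) else 1) := by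
      intro t ht; simp only [Finset.mem_Icc] at ht
      by_cases h2n : t = 2 * n
      · subst h2n
        rw [phi_2n, if_neg (fun hc => by have := hKn _ hc.1; omega)]
      · rw [phi_high t ht.1 (by omega), if_neg (hnM _)]
    rw [hsplit, hlow, phi_n, if_neg hnN, Finset.prod_congr rfl hhigh1, hKprod]
    ring
  · -- case of a common maximum p
    intro p hp hq
    obtain ⟨hpJ, hJle⟩ := max_eq_iff_aux.mp hp
    obtain ⟨hpK, hKle⟩ := max_eq_iff_aux.mp hq
    have hp1 : 1 ≤ p := (hJn p hpJ).1
    have hpn : p ≤ n := (hJn p hpJ).2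
    rcases eq_or_lt_of_le hpn with heq | hlt
    · -- p = n
      rw [heq] at hp hq hpJ hpK ⊢
      have hφn : phiC n Q u L n = (((u n)⁻¹ : Rˣ) : R) := by
        rw [phi_n, if_pos ⟨hpJ, hpK⟩]
      have hhigh : ∀ t ∈ Finset.Icc (n + 1) (2 * n), phiC n Q u L t =
          (if 2 * n - t ∈ K ∧ 2 * n + 1 - t ∈ K then (((u (2 * n - t))⁻¹ : Rˣ) : R) else 1) := by
        intro t ht; simp only [Finset.mem_Icc] at ht
        by_cases h2n : t = 2 * n
        · subst h2n
          rw [phi_2n, if_neg (fun hc => by have := hKn _ hc.1; omega)]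
        · rw [phi_high t ht.1 (by omega), if_neg ?_]
          rintro ⟨h1, -⟩
          have : (2 * n - t : ℕ) = n := by exact_mod_cast h1.symm.trans hp
          omega
      rw [hsplit, hlow, hφn, Finset.prod_congr rfl hhigh, hKprod,
        Finset.Icc_self, Finset.prod_singleton]
      have h1 : ((u n : R)) * (((u n)⁻¹ : Rˣ) : R) = 1 := Units.mul_inv (u n)
      rw [hu n] at h1
      linear_combination (cC n u J * cC n u K) * h1
    · -- p < n
      have hnJK : ¬(n ∈ J ∧ n ∈ K) := by
        rintro ⟨h1, -⟩; have := hJle n h1; omega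
      have hmem : 2 * n - p ∈ Finset.Icc (n + 1) (2 * n) := by
        simp only [Finset.mem_Icc]; omega
      have e : 2 * n - (2 * n - p) = p := by omega
      have hφt0 : phiC n Q u L (2 * n - p) =
          1 + (∏ i ∈ Finset.Icc p n, Q i) * (((u p)⁻¹ : Rˣ) : R) := by
        rw [phi_high _ (by omega) (by omega), e, if_pos ⟨hp, hq⟩]
      have herase : ∀ t ∈ (Finset.Icc (n + 1) (2 * n)).erase (2 * n - p),
          phiC n Q u L t =
          (if 2 * n - t ∈ K ∧ 2 * n + 1 - t ∈ K then (((u (2 * n - t))⁻¹ : Rˣ) : R) else 1) := by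
        intro t ht
        simp only [Finset.mem_erase, Finset.mem_Icc] at ht
        by_cases h2n : t = 2 * n
        · subst h2n
          rw [phi_2n, if_neg (fun hc => by have := hKn _ hc.1; omega)]
        · rw [phi_high t ht.2.1 (by omega), if_neg ?_]
          rintro ⟨h1, -⟩
          have : (2 * n - t : ℕ) = p := by exact_mod_cast h1.symm.trans hp
          omega
      have hfK0 : (if 2 * n - (2 * n - p) ∈ K ∧ 2 * n + 1 - (2 * n - p) ∈ K then
          (((u (2 * n - (2 * n - p)))⁻¹ : Rˣ) : R) else 1) = 1 := by
        rw [if_neg ?_]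
        rintro ⟨-, h2⟩
        rw [show 2 * n + 1 - (2 * n - p) = p + 1 by omega] at h2
        have := hKle _ h2; omega
      rw [hsplit, hlow, phi_n, if_neg hnJK,
        ← Finset.mul_prod_erase _ _ hmem, hφt0,
        Finset.prod_congr rfl herase,
        Finset.prod_erase (f := fun t => if 2 * n - t ∈ K ∧ 2 * n + 1 - t ∈ K then
          (((u (2 * n - t))⁻¹ : Rˣ) : R) else 1) _ hfK0, hKprod]
      ring
end

section
/- Let W be the group of signed permutations of {1,...,n} and let J = {i_1 < ... < i_r} ⊆ {1,...,n}. Suppose w ∈ W satisfies: for all 1 ≤ i < j ≤ n with (i ∉ J or j ∈ J), w(i) < w(j). Then for any 1 ≤ s ≤ r and any 1 ≤ k < i_s with k ∉ J and k ≠ i_s - 1, there exists p with k < p < i_s and w(k) < w(p) < w(i_s); consequently there is no Bruhat edge w → w·s_{(k,i_s)} in the quantum Bruhat graph, and the only positive roots of the form (k, i_s) with k < i_s, k ∉ J that can label a Bruhat edge starting at w are (i_s - 1, i_s). -/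
/-- Signed permutations of `{1,…,n}` modeled as permutations of `Fin (2*n)` commuting with
`Fin.rev`; positions of value `< n` are the positive entries `1,…,n`.  Let `J` be a set of
positive entries.  If `w` satisfies: `w i < w j` for all `i < j ≤ n` with (`i ∉ J` or
`j ∈ J`), then for any `j₀ ∈ J` and any positive `k < j₀` with `k ∉ J` and `k ≠ j₀ - 1`
there is `p` with `k < p < j₀` and `w k < w p < w j₀`; consequently, by Lenart's criterion,
there is no Bruhat edge `w → w·s_{(k,j₀)}` in the quantum Bruhat graph, so the only roots
`(k, j₀)` with `k < j₀`, `k ∉ J` that can label a Bruhat edge starting at `w` are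
`(j₀ - 1, j₀)`. -/
theorem stmt12 (n : ℕ) (J : Finset (Fin (2 * n))) (hJ : ∀ j ∈ J, (j : ℕ) < n)
    (w : Equiv.Perm (Fin (2 * n))) (hw : ∀ k, w k.rev = (w k).rev)
    (hmono : ∀ i j : Fin (2 * n), (i : ℕ) < n → (j : ℕ) < n → i < j →
      (i ∉ J ∨ j ∈ J) → w i < w j) :
    ∀ j₀ ∈ J, ∀ k : Fin (2 * n), (k : ℕ) < n → k < j₀ → k ∉ J → (k : ℕ) ≠ (j₀ : ℕ) - 1 →
      (∃ p : Fin (2 * n), k < p ∧ p < j₀ ∧ w k < w p ∧ w p < w j₀) ∧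
      ¬(w k < w j₀ ∧
        ∀ p : Fin (2 * n), k < p → p < j₀ → ¬(w k < w p ∧ w p < w j₀)) := by
  intro j₀ hj₀ k hk hkj hkJ hkne
  have hjn : (j₀ : ℕ) < n := hJ j₀ hj₀
  have hkjn : (k : ℕ) < (j₀ : ℕ) := hkj
  have hp2n : (k : ℕ) + 1 < 2 * n := by omega
  set p : Fin (2 * n) := ⟨(k : ℕ) + 1, hp2n⟩ with hp
  have hkp : k < p := by simp [hp, Fin.lt_def]
  have hpj : p < j₀ := by
    simp only [hp, Fin.lt_def]
    omega
  have hpn : (p : ℕ) < n := by simp [hp]; omega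
  have h1 : w k < w p := hmono k p hk hpn hkp (Or.inl hkJ)
  have h2 : w p < w j₀ := hmono p j₀ hpn hjn hpj (Or.inr hj₀)
  refine ⟨⟨p, hkp, hpj, h1, h2⟩, ?_⟩
  rintro ⟨-, hall⟩
  exact hall p hkp hpj ⟨h1, h2⟩
end

section
/- In the Weyl group W of type C_n (signed permutations), for w ∈ W and 1 ≤ i ≤ n, there is a quantum edge w → w·s_{(i,ī)} labeled by the long root 2ε_i in the quantum Bruhat graph if and only if sign(w(i)) = -1 and for all i < k ≤ n, w(ī) < w(k) < w(i) in the order 1<...<n<n̄<...<1̄. Equivalently, ℓ(w·s_{(i,ī)}) = ℓ(w) - 2⟨ρ, (2ε_i)^∨⟩ + 1 holds exactly under these conditions. -/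
/-- Length of a signed permutation `w` of `{1,…,n}` (modeled as a permutation of `Fin (2*n)`
commuting with `Fin.rev`, the order on `Fin (2*n)` realizing `1 < ⋯ < n < n̄ < ⋯ < 1̄`):
the number of positive roots of type `C_n` sent to negative roots, namely
`#{(i,j) : i < j ≤ n, w(ε_i - ε_j) < 0} + #{(i,j) : i < j ≤ n, w(ε_i + ε_j) < 0}
  + #{i ≤ n : w(2ε_i) < 0}`, which in the model amounts to
`#{i < j : w i > w j} + #{i < j : w i > (w j).rev} + #{i : (w i).rev < w i}`
(indices ranging over positive positions). -/
def lenC (n : ℕ) (w : Equiv.Perm (Fin (2 * n))) : ℕ :=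
  (Finset.univ.filter (fun p : Fin (2 * n) × Fin (2 * n) =>
      (p.1 : ℕ) < n ∧ (p.2 : ℕ) < n ∧ p.1 < p.2 ∧ w p.2 < w p.1)).card +
  (Finset.univ.filter (fun p : Fin (2 * n) × Fin (2 * n) =>
      (p.1 : ℕ) < n ∧ (p.2 : ℕ) < n ∧ p.1 < p.2 ∧ (w p.2).rev < w p.1)).card +
  (Finset.univ.filter (fun i : Fin (2 * n) =>
      (i : ℕ) < n ∧ (w i).rev < w i)).card

set_option maxHeartbeats 1600000 in
/-- Lenart's criterion for quantum edges labeled by long roots in the type `C_n` quantum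
Bruhat graph: for a signed permutation `w` and `1 ≤ i ≤ n`, the quantum-edge length
condition `ℓ(w·s_{(i,ī)}) = ℓ(w) - 2⟨ρ, (2ε_i)^∨⟩ + 1` (with `⟨ρ, (2ε_i)^∨⟩ = n - i + 1`,
i.e. `n - i₀` for the `0`-indexed position `i₀`) holds if and only if `sign (w i) = -1`
(i.e. `w i` lies in the barred range) and for all `i < k ≤ n`, `w ī < w k < w i`. -/
theorem stmt13 (n : ℕ) (w : Equiv.Perm (Fin (2 * n)))
    (hw : ∀ k, w k.rev = (w k).rev)
    (i : Fin (2 * n)) (hi : (i : ℕ) < n) :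
    ((lenC n (w * Equiv.swap i i.rev) : ℤ) =
        (lenC n w : ℤ) - 2 * ((n : ℤ) - (i : ℕ)) + 1) ↔
      (n ≤ ((w i : Fin (2 * n)) : ℕ) ∧
        ∀ k : Fin (2 * n), (i : ℕ) < (k : ℕ) → (k : ℕ) < n →
          w i.rev < w k ∧ w k < w i) := by
  have hX := (w i).isLt
  have hXr : (((w i).rev : Fin (2*n)) : ℕ) = 2*n - (((w i : Fin (2*n)) : ℕ) + 1) :=
    Fin.val_rev _
  set s : Equiv.Perm (Fin (2*n)) := Equiv.swap i i.rev with hs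
  have hirev : n ≤ (i.rev : ℕ) := by rw [Fin.val_rev]; omega
  have hine : ∀ a : Fin (2*n), (a:ℕ) < n → a ≠ i.rev := by
    intro a ha h; rw [h] at ha; omega
  have hW : ∀ a : Fin (2*n), (a:ℕ) < n → a ≠ i → (w * s) a = w a := by
    intro a ha hai
    simp [s, Equiv.Perm.mul_apply, Equiv.swap_apply_of_ne_of_ne hai (hine a ha)]
  have hWi : (w * s) i = (w i).rev := by
    simp [s, Equiv.Perm.mul_apply, hw]
  have hvne : ∀ b : Fin (2*n), (b:ℕ) < n → b ≠ i →
      ((w b : Fin (2*n)) : ℕ) ≠ ((w i : Fin (2*n)) : ℕ) ∧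
      ((w b : Fin (2*n)) : ℕ) ≠ 2*n - (((w i : Fin (2*n)) : ℕ) + 1) := by
    intro b hbn hbi
    refine ⟨fun h => hbi (w.injective (Fin.val_injective h)), fun h => ?_⟩
    have h2 : w b = (w i).rev := Fin.val_injective (by rw [Fin.val_rev]; exact h)
    rw [← hw] at h2
    exact hine b hbn (w.injective h2)
  -- cast lenC to integer double sums
  have hlen : ∀ v : Equiv.Perm (Fin (2*n)), (lenC n v : ℤ) =
      (∑ a : Fin (2*n), ∑ b : Fin (2*n),
        ((if ((a:ℕ) < n ∧ (b:ℕ) < n ∧ a < b ∧ v b < v a) then (1:ℤ) else 0)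
        + (if ((a:ℕ) < n ∧ (b:ℕ) < n ∧ a < b ∧ (v b).rev < v a) then (1:ℤ) else 0)))
      + ∑ k : Fin (2*n), (if ((k:ℕ) < n ∧ (v k).rev < v k) then (1:ℤ) else 0) := by
    intro v
    simp only [lenC, Finset.card_filter, Fintype.sum_prod_type]
    push_cast
    rw [← Finset.sum_add_distrib]
    congr 1
    exact Finset.sum_congr rfl fun a _ => Finset.sum_add_distrib.symm
  set T : Fin (2*n) → ℤ := fun b =>
    if (i:ℕ) < (b:ℕ) ∧ (b:ℕ) < n then
      2 - 2*((if w b < w i then (1:ℤ) else 0) + (if (w b).rev < w i then (1:ℤ) else 0))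
    else 0 with hT
  set D : ℤ := if ((w i : Fin (2*n)) : ℕ) < n then 1 else -1 with hD
  have key : (lenC n (w*s) : ℤ) - lenC n w = (∑ b : Fin (2*n), T b) + D := by
    rw [hlen, hlen]
    have h1 : (∑ a : Fin (2*n), ∑ b : Fin (2*n),
        ((if ((a:ℕ) < n ∧ (b:ℕ) < n ∧ a < b ∧ (w*s) b < (w*s) a) then (1:ℤ) else 0)
        + (if ((a:ℕ) < n ∧ (b:ℕ) < n ∧ a < b ∧ ((w*s) b).rev < (w*s) a) then (1:ℤ) else 0)))
      - (∑ a : Fin (2*n), ∑ b : Fin (2*n),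
        ((if ((a:ℕ) < n ∧ (b:ℕ) < n ∧ a < b ∧ w b < w a) then (1:ℤ) else 0)
        + (if ((a:ℕ) < n ∧ (b:ℕ) < n ∧ a < b ∧ (w b).rev < w a) then (1:ℤ) else 0)))
      = ∑ b : Fin (2*n), T b := by
      rw [← Finset.sum_sub_distrib]
      refine Eq.trans (Finset.sum_eq_single_of_mem i (Finset.mem_univ i) ?_) ?_
      · -- other rows vanish
        intro a _ hai
        rw [← Finset.sum_sub_distrib]
        refine Finset.sum_eq_zero fun b _ => ?_
        by_cases han : (a:ℕ) < n
        · have hwa := hW a han hai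
          by_cases hbi : b = i
          · subst hbi
            rw [hwa, hWi, Fin.rev_rev]
            have hA := (w a).isLt
            simp only [Fin.lt_def]
            split_ifs <;> omega
          · by_cases hbn : (b:ℕ) < n
            · rw [hwa, hW b hbn hbi]; ring
            · simp only [Fin.lt_def]
              split_ifs <;> omega
        · simp only [Fin.lt_def]
          split_ifs <;> omega
      · rw [← Finset.sum_sub_distrib]
        refine Finset.sum_congr rfl fun b _ => ?_
        simp only [hT]
        by_cases hbn : (b:ℕ) < n
        · by_cases hbi : b = i
          · subst hbi
            simp only [Fin.lt_def]
            split_ifs <;> omega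
          · by_cases hib : (i:ℕ) < (b:ℕ)
            · obtain ⟨h1, h2⟩ := hvne b hbn hbi
              have hB := (w b).isLt
              have hBr : (((w b).rev : Fin (2*n)) : ℕ) = 2*n - (((w b : Fin (2*n)) : ℕ) + 1) :=
                Fin.val_rev _
              rw [hWi, hW b hbn hbi]
              simp only [Fin.lt_def]
              split_ifs <;> omega
            · simp only [Fin.lt_def]
              split_ifs <;> omega
        · simp only [Fin.lt_def]
          split_ifs <;> omega
    have h2 : (∑ k : Fin (2*n), (if ((k:ℕ) < n ∧ ((w*s) k).rev < (w*s) k) then (1:ℤ) else 0))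
        - (∑ k : Fin (2*n), (if ((k:ℕ) < n ∧ (w k).rev < w k) then (1:ℤ) else 0)) = D := by
      rw [← Finset.sum_sub_distrib]
      refine Eq.trans (Finset.sum_eq_single_of_mem i (Finset.mem_univ i) ?_) ?_
      · intro k _ hki
        by_cases hkn : (k:ℕ) < n
        · rw [hW k hkn hki]; ring
        · simp only [Fin.lt_def]
          split_ifs <;> omega
      · rw [hWi, Fin.rev_rev, hD]
        simp only [Fin.lt_def]
        split_ifs <;> omega
    linarith [h1, h2]
  have hfilter : (Finset.range (2*n)).filter (fun v => (i:ℕ) < v ∧ v < n) = Finset.Ioo (i:ℕ) n := by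
    ext v; simp only [Finset.mem_filter, Finset.mem_range, Finset.mem_Ioo]; omega
  have hSg : (∑ b : Fin (2*n), if (i:ℕ) < (b:ℕ) ∧ (b:ℕ) < n then (-2:ℤ) else 0)
      = -2 * ((n:ℤ) - 1 - (i:ℕ)) := by
    rw [Fin.sum_univ_eq_sum_range (fun v => if (i:ℕ) < v ∧ v < n then (-2:ℤ) else 0) (2*n)]
    rw [← Finset.sum_filter, hfilter, Finset.sum_const, Nat.card_Ioo, nsmul_eq_mul]
    omega
  have hle : ∀ b ∈ (Finset.univ : Finset (Fin (2*n))),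
      (if (i:ℕ) < (b:ℕ) ∧ (b:ℕ) < n then (-2:ℤ) else 0) ≤ T b := by
    intro b _
    simp only [hT]
    split_ifs <;> omega
  have hsum_le := Finset.sum_le_sum hle
  have hconv : ∀ b : Fin (2*n), ((w b).rev < w i ↔ w i.rev < w b) := by
    intro b
    have h1 := (w b).isLt
    simp only [hw, Fin.lt_def, Fin.val_rev]
    omega
  have hD12 : D = 1 ∨ D = -1 := by rw [hD]; split_ifs <;> simp
  constructor
  · intro h
    have hST : (∑ b : Fin (2*n), T b) + D = -2*((n:ℤ) - (i:ℕ)) + 1 := by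
      rw [← key]; omega
    have hDeq : D = -1 := by omega
    have hSum_eq : (∑ b : Fin (2*n), if (i:ℕ) < (b:ℕ) ∧ (b:ℕ) < n then (-2:ℤ) else 0)
        = ∑ b : Fin (2*n), T b := by omega
    have hXn : n ≤ ((w i : Fin (2*n)) : ℕ) := by
      by_contra hc
      rw [hD, if_pos (by omega)] at hDeq
      omega
    refine ⟨hXn, fun k hik hkn => ?_⟩
    have hpt := (Finset.sum_eq_sum_iff_of_le hle).mp hSum_eq k (Finset.mem_univ k)
    simp only [hT] at hpt
    rw [if_pos ⟨hik, hkn⟩, if_pos ⟨hik, hkn⟩] at hpt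
    have hlt1 : w k < w i := by
      by_contra hc
      rw [if_neg hc] at hpt
      split_ifs at hpt <;> omega
    have hlt2 : (w k).rev < w i := by
      by_contra hc
      rw [if_neg hc] at hpt
      split_ifs at hpt <;> omega
    exact ⟨(hconv k).mp hlt2, hlt1⟩
  · rintro ⟨hXn, hall⟩
    have hDeq : D = -1 := by rw [hD, if_neg (by omega)]
    have hSum_eq : (∑ b : Fin (2*n), T b)
        = ∑ b : Fin (2*n), if (i:ℕ) < (b:ℕ) ∧ (b:ℕ) < n then (-2:ℤ) else 0 := by
      refine Finset.sum_congr rfl fun b _ => ?_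
      simp only [hT]
      by_cases hcond : (i:ℕ) < (b:ℕ) ∧ (b:ℕ) < n
      · obtain ⟨hc1, hc2⟩ := hall b hcond.1 hcond.2
        rw [if_pos hcond, if_pos hcond, if_pos hc2, if_pos ((hconv b).mpr hc1)]
        ring
      · rw [if_neg hcond, if_neg hcond]
    omega
end

section
/- Let R be a commutative ring containing elements a_J for each J ⊆ {1,...,n}, elements Q_1,...,Q_n with 1-Q_j invertible, and Q_0 := 0, satisfying for each 1 ≤ p ≤ n and each pair J, K ⊆ {1,...,p-1}: a-type product splitting as in Corollary 4.8. Suppose moreover the 'inverse' relation a_{{p}}·b_{{p}} = (1-Q_{p-1})(1-Q_p) holds, where b_J is a second family with the analogous multiplicative splitting. Then for all 1 ≤ d and 1 ≤ p ≤ n: ∑_{J,K ⊆ {1,...,n}, |J|+|K|=d, max J = max K = p} a_J·b_K = ((1-Q_p)/(1-Q_{p-1}))·∑_{k+l=d-2} (A_k^{p-1} - Q_{p-1}A_k^{p-2})·(B_l^{p-1} - Q_{p-1}B_l^{p-2}), where A_k^m := ∑_{J⊆{1,...,m},|J|=k} a_J and B_l^m := ∑_{K⊆{1,...,m},|K|=l}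 b_K. -/
section Stmt16Helpers

/-- Reindex a sum over subsets of `[1,n]` with `max = p` by removing `p`. -/
private lemma stmt16_reindex {M : Type*} [AddCommMonoid M] (n p : ℕ) (hp1 : 1 ≤ p)
    (hpn : p ≤ n) (f : Finset ℕ → M) :
    (∑ J ∈ (Finset.Icc 1 n).powerset, if J.max = (p : ℕ) then f J else 0)
      = ∑ J ∈ (Finset.Icc 1 (p - 1)).powerset, f (insert p J) := by
  simp only [Nat.cast_withBot, Nat.cast_id]
  rw [← Finset.sum_filter]
  refine Finset.sum_nbij' (fun J => J.erase p) (fun J => insert p J) ?_ ?_ ?_ ?_ ?_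
  · intro J hJ
    simp only [Finset.mem_filter, Finset.mem_powerset] at hJ
    obtain ⟨hsub, hmax⟩ := hJ
    simp only [Finset.mem_powerset]
    intro x hx
    have hx' := Finset.mem_of_mem_erase hx
    have hxp : x ≠ p := Finset.ne_of_mem_erase hx
    have h1 : x ∈ Finset.Icc 1 n := hsub hx'
    have h2 : (x : WithBot ℕ) ≤ J.max := Finset.le_max hx'
    rw [hmax] at h2
    have h2' : x ≤ p := WithBot.coe_le_coe.mp h2
    simp only [Finset.mem_Icc] at h1 ⊢
    omega
  · intro J hJ
    simp only [Finset.mem_powerset] at hJ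
    simp only [Finset.mem_filter, Finset.mem_powerset]
    constructor
    · intro x hx
      rcases Finset.mem_insert.mp hx with rfl | hx
      · simp only [Finset.mem_Icc]; omega
      · have := hJ hx; simp only [Finset.mem_Icc] at this ⊢; omega
    · apply le_antisymm
      · apply Finset.max_le
        intro x hx
        rcases Finset.mem_insert.mp hx with rfl | hx
        · exact le_rfl
        · have := hJ hx; simp only [Finset.mem_Icc] at this
          exact WithBot.coe_le_coe.mpr (Nat.le_trans this.2 (by omega))
      · exact Finset.le_max (Finset.mem_insert_self p _)
  · intro J hJ
    simp only [Finset.mem_filter, Finset.mem_powerset] at hJ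
    exact Finset.insert_erase (Finset.mem_of_max hJ.2)
  · intro J hJ
    simp only [Finset.mem_powerset] at hJ
    apply Finset.erase_insert
    intro hmem
    have := hJ hmem
    simp only [Finset.mem_Icc] at this
    omega
  · intro J hJ
    simp only [Finset.mem_filter, Finset.mem_powerset] at hJ
    rw [Finset.insert_erase (Finset.mem_of_max hJ.2)]

/-- Convolution: a double powerset sum with a cardinality constraint splits
as a sum of products over `powersetCard`. -/
private lemma stmt16_conv {R : Type*} [CommRing R] (S T : Finset ℕ) (m : ℕ)
    (f g : Finset ℕ → R) :
    (∑ J ∈ S.powerset, ∑ K ∈ T.powerset,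
        if J.card + K.card = m then f J * g K else 0)
      = ∑ k ∈ Finset.range (m + 1),
          (∑ J ∈ S.powersetCard k, f J) * (∑ K ∈ T.powersetCard (m - k), g K) := by
  have key : ∀ J K : Finset ℕ,
      (if J.card + K.card = m then f J * g K else 0)
        = ∑ k ∈ Finset.range (m + 1),
            (if J.card = k then f J else 0) * (if K.card = m - k then g K else 0) := by
    intro J K
    by_cases h : J.card + K.card = m
    · rw [Finset.sum_eq_single J.card (fun k _ hk => by
        rw [if_neg (fun hh : J.card = k => hk hh.symm), zero_mul])
        (fun hmem => absurd (Finset.mem_range.mpr (by omega)) hmem)]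
      rw [if_pos h, if_pos rfl, if_pos (show K.card = m - J.card by omega)]
    · rw [if_neg h]
      refine (Finset.sum_eq_zero fun k hk => ?_).symm
      simp only [Finset.mem_range] at hk
      rcases eq_or_ne J.card k with h1 | h1
      · rw [if_neg (show ¬ K.card = m - k by omega), mul_zero]
      · rw [if_neg h1, zero_mul]
  simp_rw [key]
  rw [Finset.sum_congr rfl fun J _ => Finset.sum_comm, Finset.sum_comm]
  refine Finset.sum_congr rfl fun k _ => ?_
  rw [← Finset.sum_mul_sum]
  congr 1
  · rw [Finset.powersetCard_eq_filter, Finset.sum_filter]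
  · rw [Finset.powersetCard_eq_filter, Finset.sum_filter]

/-- The "twist" lemma: summing with the corrective factor over subsets of `[1,p-1]`
produces the difference `A_k^{p-1} - q·A_k^{p-2}` up to the unit `v`. -/
private lemma stmt16_twist {R : Type*} [CommRing R] (p k : ℕ) (aa : Finset ℕ → R)
    (q v : R) (hv : v * (1 - q) = 1) :
    (∑ J ∈ (Finset.Icc 1 (p - 1)).powersetCard k, (if p - 1 ∈ J then v else 1) * aa J)
      = v * ((∑ J ∈ (Finset.Icc 1 (p - 1)).powersetCard k, aa J)
          - q * ∑ J ∈ (Finset.Icc 1 (p - 2)).powersetCard k, aa J) := by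
  have hfil : (Finset.Icc 1 (p - 2)).powersetCard k
      = ((Finset.Icc 1 (p - 1)).powersetCard k).filter (fun J => ¬ (p - 1 ∈ J)) := by
    ext J
    simp only [Finset.mem_powersetCard, Finset.mem_filter]
    constructor
    · rintro ⟨hsub, hc⟩
      refine ⟨⟨fun x hx => ?_, hc⟩, fun hmem => ?_⟩
      · have hh := hsub hx; simp only [Finset.mem_Icc] at hh ⊢; omega
      · have hh := hsub hmem; simp only [Finset.mem_Icc] at hh; omega
    · rintro ⟨⟨hsub, hc⟩, hmem⟩
      refine ⟨fun x hx => ?_, hc⟩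
      have hh := hsub hx
      have hne : x ≠ p - 1 := fun h => hmem (h ▸ hx)
      simp only [Finset.mem_Icc] at hh ⊢
      omega
  rw [hfil]
  have hsplit := Finset.sum_filter_add_sum_filter_not
    ((Finset.Icc 1 (p - 1)).powersetCard k) (fun J => p - 1 ∈ J) aa
  have hrw : ∀ J : Finset ℕ,
      (if p - 1 ∈ J then v else 1) * aa J = if p - 1 ∈ J then v * aa J else aa J := by
    intro J; split_ifs <;> ring
  simp_rw [hrw]
  rw [Finset.sum_ite, ← hsplit, ← Finset.mul_sum]
  set C := ∑ J ∈ ((Finset.Icc 1 (p - 1)).powersetCard k).filter (fun J => p - 1 ∈ J), aa J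
  set D := ∑ J ∈ ((Finset.Icc 1 (p - 1)).powersetCard k).filter (fun J => ¬ p - 1 ∈ J), aa J
  linear_combination -D * hv

end Stmt16Helpers

/-- Abstract form of the key lemma for the type-`C` quantum Whitney relation.
Let `R` be a commutative ring with `Q 0 = 0` and units `u j = 1 - Q j`, and families
`a S`, `b S` (`S ⊆ {1,…,n}`) with `a ∅ = b ∅ = 1` satisfying the multiplicative splitting
(Corollary 4.8): for `1 ≤ k ≤ n` and `J ⊆ {1,…,k-1}`,
`a (J ∪ {k}) = (1/(1-Q_{k-1}))·a J·a {k}` if `k-1 ∈ J` and `a (J ∪ {k}) = a J·a {k}`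
otherwise (likewise for `b`), together with the inverse relation
`a {p}·b {p} = (1-Q_{p-1})(1-Q_p)`.  Then for all `d ≥ 1` and `1 ≤ p ≤ n`:
`∑_{J,K ⊆ {1,…,n}, |J|+|K| = d, max J = max K = p} a_J·b_K
 = ((1-Q_p)/(1-Q_{p-1}))·∑_{k+l=d-2} (A_k^{p-1} - Q_{p-1}A_k^{p-2})·(B_l^{p-1} - Q_{p-1}B_l^{p-2})`,
where `A_k^m = ∑_{J ⊆ {1,…,m}, |J| = k} a_J` and `B_l^m = ∑_{K ⊆ {1,…,m}, |K| = l} b_K`. -/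
theorem stmt16 (R : Type*) [CommRing R] (n : ℕ) (Q : ℕ → R) (hQ0 : Q 0 = 0)
    (u : ℕ → Rˣ) (hu : ∀ j, (u j : R) = 1 - Q j)
    (a b : Finset ℕ → R) (ha1 : a ∅ = 1) (hb1 : b ∅ = 1)
    (ha : ∀ (k : ℕ) (J : Finset ℕ), 1 ≤ k → k ≤ n → J ⊆ Finset.Icc 1 (k - 1) →
      a (insert k J) =
        (if k - 1 ∈ J then (((u (k - 1))⁻¹ : Rˣ) : R) else 1) * (a J * a {k}))
    (hb : ∀ (k : ℕ) (K : Finset ℕ), 1 ≤ k → k ≤ n → K ⊆ Finset.Icc 1 (k - 1) →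
      b (insert k K) =
        (if k - 1 ∈ K then (((u (k - 1))⁻¹ : Rˣ) : R) else 1) * (b K * b {k}))
    (hinv : ∀ p : ℕ, 1 ≤ p → p ≤ n →
      a {p} * b {p} = (1 - Q (p - 1)) * (1 - Q p)) :
    ∀ d p : ℕ, 1 ≤ d → 1 ≤ p → p ≤ n →
      (∑ J ∈ (Finset.Icc 1 n).powerset, ∑ K ∈ (Finset.Icc 1 n).powerset,
          if J.card + K.card = d ∧ J.max = (p : ℕ) ∧ K.max = (p : ℕ) then a J * b K else 0) =
        (1 - Q p) * (((u (p - 1))⁻¹ : Rˣ) : R) *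
          ∑ k ∈ Finset.range (d - 1),
            ((∑ J ∈ (Finset.Icc 1 (p - 1)).powersetCard k, a J) -
                Q (p - 1) * ∑ J ∈ (Finset.Icc 1 (p - 2)).powersetCard k, a J) *
              ((∑ K ∈ (Finset.Icc 1 (p - 1)).powersetCard (d - 2 - k), b K) -
                Q (p - 1) * ∑ K ∈ (Finset.Icc 1 (p - 2)).powersetCard (d - 2 - k), b K) := by
  intro d p hd hp1 hpn
  have hv : (((u (p - 1))⁻¹ : Rˣ) : R) * (1 - Q (p - 1)) = 1 := by
    rw [← hu]
    exact_mod_cast Units.inv_mul (u (p - 1))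
  -- Step 1: restructure the condition and reindex both sums by removing `p`.
  have hsummand : ∀ J K : Finset ℕ,
      (if J.card + K.card = d ∧ J.max = (p : ℕ) ∧ K.max = (p : ℕ) then a J * b K else 0)
        = if J.max = (p : ℕ) then
            (if K.max = (p : ℕ) then (if J.card + K.card = d then a J * b K else 0) else 0)
          else 0 := by
    intro J K
    split_ifs <;> tauto
  simp_rw [hsummand]
  have hpull : ∀ J : Finset ℕ,
      (∑ K ∈ (Finset.Icc 1 n).powerset, if J.max = (p : ℕ) then
          (if K.max = (p : ℕ) then (if J.card + K.card = d then a J * b K else 0) else 0)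
        else 0)
        = if J.max = (p : ℕ) then
            (∑ K ∈ (Finset.Icc 1 n).powerset, if K.max = (p : ℕ) then
              (if J.card + K.card = d then a J * b K else 0) else 0)
          else 0 := by
    intro J
    split_ifs with h <;> simp [h]
  rw [Finset.sum_congr rfl fun J _ => hpull J]
  rw [stmt16_reindex n p hp1 hpn]
  rw [Finset.sum_congr rfl fun J (_ : J ∈ (Finset.Icc 1 (p-1)).powerset) =>
    stmt16_reindex n p hp1 hpn
      (fun K => if (insert p J).card + K.card = d then a (insert p J) * b K else 0)]
  -- membership facts
  have hnot : ∀ J : Finset ℕ, J ∈ (Finset.Icc 1 (p - 1)).powerset → p ∉ J := by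
    intro J hJ hmem
    have := (Finset.mem_powerset.mp hJ) hmem
    simp only [Finset.mem_Icc] at this
    omega
  rcases Nat.lt_or_ge d 2 with hd2 | hd2
  · -- d = 1 : both sides vanish
    have h1 : d - 1 = 0 := by omega
    rw [h1]
    simp only [Finset.range_zero, Finset.sum_empty, mul_zero]
    apply Finset.sum_eq_zero
    intro J hJ
    apply Finset.sum_eq_zero
    intro K hK
    rw [if_neg]
    intro hcard
    have hJc : 1 ≤ (insert p J).card := Finset.card_pos.mpr ⟨p, Finset.mem_insert_self p J⟩
    have hKc : 1 ≤ (insert p K).card := Finset.card_pos.mpr ⟨p, Finset.mem_insert_self p K⟩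
    omega
  · -- main case d ≥ 2
    have hstep : ∀ J ∈ (Finset.Icc 1 (p - 1)).powerset, ∀ K ∈ (Finset.Icc 1 (p - 1)).powerset,
        (if (insert p J).card + (insert p K).card = d
            then a (insert p J) * b (insert p K) else 0)
          = if J.card + K.card = d - 2 then
              ((if p - 1 ∈ J then (((u (p - 1))⁻¹ : Rˣ) : R) else 1) * (a J * a {p})) *
              ((if p - 1 ∈ K then (((u (p - 1))⁻¹ : Rˣ) : R) else 1) * (b K * b {p})) else 0 := by
      intro J hJ K hK
      rw [Finset.card_insert_of_notMem (hnot J hJ), Finset.card_insert_of_notMem (hnot K hK),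
        ha p J hp1 hpn (Finset.mem_powerset.mp hJ), hb p K hp1 hpn (Finset.mem_powerset.mp hK)]
      exact if_congr (by omega) rfl rfl
    rw [Finset.sum_congr rfl fun J hJ => Finset.sum_congr rfl fun K hK => hstep J hJ K hK]
    rw [stmt16_conv]
    rw [show d - 2 + 1 = d - 1 from by omega]
    rw [Finset.mul_sum]
    refine Finset.sum_congr rfl fun k _ => ?_
    have hfa : (∑ J ∈ (Finset.Icc 1 (p - 1)).powersetCard k,
        (if p - 1 ∈ J then (((u (p - 1))⁻¹ : Rˣ) : R) else 1) * (a J * a {p}))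
        = a {p} * ∑ J ∈ (Finset.Icc 1 (p - 1)).powersetCard k,
            (if p - 1 ∈ J then (((u (p - 1))⁻¹ : Rˣ) : R) else 1) * a J := by
      rw [Finset.mul_sum]
      exact Finset.sum_congr rfl fun J _ => by ring
    have hfb : (∑ K ∈ (Finset.Icc 1 (p - 1)).powersetCard (d - 2 - k),
        (if p - 1 ∈ K then (((u (p - 1))⁻¹ : Rˣ) : R) else 1) * (b K * b {p}))
        = b {p} * ∑ K ∈ (Finset.Icc 1 (p - 1)).powersetCard (d - 2 - k),
            (if p - 1 ∈ K then (((u (p - 1))⁻¹ : Rˣ) : R) else 1) * b K := by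
      rw [Finset.mul_sum]
      exact Finset.sum_congr rfl fun K _ => by ring
    rw [hfa, hfb, stmt16_twist p k a (Q (p - 1)) _ hv,
      stmt16_twist p (d - 2 - k) b (Q (p - 1)) _ hv]
    have Hinv := hinv p hp1 hpn
    set v : R := (((u (p - 1))⁻¹ : Rˣ) : R) with hvdef
    set A : R := (∑ J ∈ (Finset.Icc 1 (p - 1)).powersetCard k, a J) -
      Q (p - 1) * ∑ J ∈ (Finset.Icc 1 (p - 2)).powersetCard k, a J with hA
    set B : R := (∑ K ∈ (Finset.Icc 1 (p - 1)).powersetCard (d - 2 - k), b K) -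
      Q (p - 1) * ∑ K ∈ (Finset.Icc 1 (p - 2)).powersetCard (d - 2 - k), b K with hB
    linear_combination (v ^ 2 * A * B) * Hinv + ((1 - Q p) * v * A * B) * hv
end
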